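/- There exists a constant C > 0 such that for all t > 0 and all x, y ∈ [0,1], ∫₀^t ∫₀¹ (G_s(x,ξ) − G_s(y,ξ))² dξ ds ≤ C |x−y|, where G is the Neumann heat kernel on (0,1). -/

import Mathlib

/-!
Parseval's identity in `ξ` turns the inner integral into
`∑ₖ 2 e^{-2k²π²s} (cos kπx - cos kπy)²`, and integrating in `s` bounds the whole quantity by
`∑ₖ dₖ² / (k²π²)` with `dₖ = cos kπx - cos kπy`. Since `|dₖ| ≤ min 2 (kπ|x - y|)`, the terms
with `k ≤ 1/|x - y|` are each at most `|x - y|²` and the rest are dominated by `1/k²`, whose tail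
beyond `1/|x - y|` is `O(|x - y|)`.
-/

open MeasureTheory Real Filter

/-- Neumann heat kernel on (0,1), via its eigenfunction expansion. -/
noncomputable def NeumannHeatKernel (t x y : ℝ) : ℝ :=
  1 + ∑' n : ℕ, 2 * Real.exp (-((n + 1 : ℝ) ^ 2) * Real.pi ^ 2 * t) *
      Real.cos ((n + 1 : ℝ) * Real.pi * x) * Real.cos ((n + 1 : ℝ) * Real.pi * y)

theorem intervalIntegral_tsum_of_norm_le {ι E : Type*} [Countable ι] [NormedAddCommGroup E]
    [NormedSpace ℝ E] [CompleteSpace E] {f : ι → ℝ → E} {u : ι → ℝ}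
    (hf : ∀ i, Continuous (f i)) (hu : Summable u) (hfu : ∀ i x, ‖f i x‖ ≤ u i) (a b : ℝ) :
    ∫ x in a..b, ∑' i, f i x = ∑' i, ∫ x in a..b, f i x :=
  (intervalIntegral.hasSum_integral_of_dominated_convergence (fun i _ => u i)
    (fun i => (hf i).aestronglyMeasurable) (fun i => ae_of_all _ fun x _ => hfu i x)
    (ae_of_all _ fun _ _ => hu) intervalIntegrable_const
    (ae_of_all _ fun x _ => (hu.of_norm_bounded (hfu · x)).hasSum)).tsum_eq.symm

theorem integral_tsum_le_tsum_of_nonneg {ι α : Type*} [Countable ι] [MeasurableSpace α]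
    {μ : Measure α} {F : ι → α → ℝ} {b : ι → ℝ} (hF_int : ∀ i, Integrable (F i) μ)
    (hF_nonneg : ∀ i a, 0 ≤ F i a) (hb : Summable b) (hFb : ∀ i, ∫ a, F i a ∂μ ≤ b i) :
    ∫ a, ∑' i, F i a ∂μ ≤ ∑' i, b i := by
  have hF_sum : Summable fun i => ∫ a, ‖F i a‖ ∂μ := by
    simp_rw [norm_of_nonneg (hF_nonneg _ _)]
    exact hb.of_nonneg_of_le (fun i => integral_nonneg (hF_nonneg i)) hFb
  rw [← integral_tsum_of_summable_integral_norm hF_int hF_sum]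
  exact (hF_sum.congr fun i => by simp_rw [norm_of_nonneg (hF_nonneg _ _)]).tsum_le_tsum hFb hb

theorem setIntegral_exp_neg_mul_le {c : ℝ} (hc : 0 < c) (t : ℝ) :
    ∫ s in Set.Ioc 0 t, exp (-c * s) ≤ 1 / c := by
  have hc' : -c < 0 := neg_lt_zero.2 hc
  calc ∫ s in Set.Ioc 0 t, exp (-c * s) ≤ ∫ s in Set.Ioi 0, exp (-c * s) :=
        setIntegral_mono_set (integrableOn_exp_mul_Ioi hc' 0)
          (ae_of_all _ fun _ => (exp_pos _).le) Set.Ioc_subset_Ioi_self.eventuallyLE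
    _ = 1 / c := by rw [integral_exp_mul_Ioi hc', mul_zero, exp_zero, div_neg, neg_div, neg_neg]

theorem summable_inv_succ_sq : Summable fun n : ℕ => ((n + 1 : ℝ) ^ 2)⁻¹ := by
  simpa using (summable_nat_add_iff 1).2 (Real.summable_nat_pow_inv.2 one_lt_two)

theorem tsum_le_three_mul_of_le_sq_of_le_inv_sq {δ : ℝ} (hδ : 0 ≤ δ) {T : ℕ → ℝ}
    (hT0 : ∀ n, 0 ≤ T n) (hTδ : ∀ n, T n ≤ δ ^ 2) (hTn : ∀ n, T n ≤ ((n + 1 : ℝ) ^ 2)⁻¹) :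
    ∑' n, T n ≤ 3 * δ := by
  rcases hδ.eq_or_lt with rfl | hδ
  · simp [funext fun n => le_antisymm (by simpa using hTδ n) (hT0 n)]
  set N := ⌊δ⁻¹⌋₊
  have hN : (N : ℝ) ≤ δ⁻¹ := Nat.floor_le (inv_nonneg.2 hδ.le)
  have hN' : δ⁻¹ < N + 1 := Nat.lt_floor_add_one _
  have head : ∑ n ∈ Finset.range N, T n ≤ δ :=
    calc ∑ n ∈ Finset.range N, T n ≤ N * δ ^ 2 :=
          (Finset.sum_le_sum fun n _ => hTδ n).trans_eq (by simp)
      _ ≤ δ⁻¹ * δ ^ 2 := by gcongr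
      _ = δ := by field_simp
  have tail (m : ℕ) : ∑ n ∈ Finset.Ico N (N + m), T n ≤ 2 * δ :=
    calc ∑ n ∈ Finset.Ico N (N + m), T n ≤ ∑ n ∈ Finset.Ico N (N + m), ((n + 1 : ℝ) ^ 2)⁻¹ :=
          Finset.sum_le_sum fun n _ => hTn n
      _ = ∑ n ∈ Finset.Ioo N (N + m + 1), ((n : ℝ) ^ 2)⁻¹ := by
          rw [← Finset.Ico_add_one_left_eq_Ioo,
            ← Finset.sum_Ico_add' (fun n : ℕ => ((n : ℝ) ^ 2)⁻¹)]
          push_cast; rfl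
      _ ≤ 2 / (N + 1) := sum_Ioo_inv_sq_le _ _
      _ ≤ 2 * δ := by
          rw [div_le_iff₀ (by positivity)]
          nlinarith [mul_inv_cancel₀ hδ.ne']
  refine tsum_le_of_sum_range_le hT0 fun m => ?_
  calc ∑ n ∈ Finset.range m, T n ≤ ∑ n ∈ Finset.range (N + m), T n :=
        Finset.sum_le_sum_of_subset_of_nonneg (Finset.range_mono (Nat.le_add_left m N))
          fun n _ _ => hT0 n
    _ = ∑ n ∈ Finset.range N, T n + ∑ n ∈ Finset.Ico N (N + m), T n :=
        (Finset.sum_range_add_sum_Ico _ (Nat.le_add_right N m)).symm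
    _ ≤ 3 * δ := by linarith [tail m]

theorem integral_cos_int_mul_pi (k : ℤ) :
    ∫ ξ in (0 : ℝ)..1, cos (k * π * ξ) = if k = 0 then 1 else 0 := by
  split_ifs with hk
  · simp [hk]
  · rw [intervalIntegral.integral_comp_mul_left (fun x => cos x) (by positivity)]
    simp [sin_int_mul_pi]

noncomputable def neumannMode (n : ℕ) (x : ℝ) : ℝ := cos ((n + 1 : ℝ) * π * x)

theorem continuous_neumannMode (n : ℕ) : Continuous (neumannMode n) := by
  unfold neumannMode; fun_prop

theorem abs_neumannMode_le_one (n : ℕ) (x : ℝ) : |neumannMode n x| ≤ 1 := abs_cos_le_one _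

theorem abs_neumannMode_sub_le (n : ℕ) (x y : ℝ) :
    |neumannMode n x - neumannMode n y| ≤ (n + 1) * π * |x - y| :=
  calc |neumannMode n x - neumannMode n y| ≤ |(n + 1 : ℝ) * π * x - (n + 1) * π * y| :=
        abs_cos_sub_cos_le _ _
    _ = (n + 1) * π * |x - y| := by rw [← mul_sub, abs_mul, abs_of_pos (by positivity)]

theorem abs_neumannMode_sub_le_two (n : ℕ) (x y : ℝ) :
    |neumannMode n x - neumannMode n y| ≤ 2 :=
  (abs_sub _ _).trans (by linarith [abs_neumannMode_le_one n x, abs_neumannMode_le_one n y])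

theorem integral_neumannMode_mul (m n : ℕ) :
    ∫ ξ in (0 : ℝ)..1, neumannMode m ξ * neumannMode n ξ = if m = n then 1 / 2 else 0 := by
  have product_to_sum (ξ : ℝ) : neumannMode m ξ * neumannMode n ξ =
      (cos (((m - n : ℤ) : ℝ) * π * ξ) + cos (((m + n + 2 : ℤ) : ℝ) * π * ξ)) / 2 := by
    have hsub : ((m - n : ℤ) : ℝ) * π * ξ = (m + 1 : ℝ) * π * ξ - (n + 1 : ℝ) * π * ξ := by
      push_cast; ring
    have hadd : ((m + n + 2 : ℤ) : ℝ) * π * ξ = (m + 1 : ℝ) * π * ξ + (n + 1 : ℝ) * π * ξ := by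
      push_cast; ring
    rw [hsub, hadd, cos_sub, cos_add, neumannMode, neumannMode]
    ring
  simp_rw [product_to_sum]
  rw [intervalIntegral.integral_div, intervalIntegral.integral_add
    ((Continuous.intervalIntegrable (by fun_prop) _ _))
    ((Continuous.intervalIntegrable (by fun_prop) _ _)),
    integral_cos_int_mul_pi, integral_cos_int_mul_pi, if_neg (show (m + n + 2 : ℤ) ≠ 0 by omega)]
  by_cases h : m = n <;> simp [h, sub_eq_zero]

section CosineSeries

variable {a : ℕ → ℝ}

theorem norm_mul_neumannMode_le (n : ℕ) (ξ : ℝ) : ‖a n * neumannMode n ξ‖ ≤ |a n| := by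
  simpa [abs_mul] using mul_le_mul_of_nonneg_left (abs_neumannMode_le_one n ξ) (abs_nonneg (a n))

theorem continuous_tsum_neumannMode (ha : Summable fun n => |a n|) :
    Continuous fun ξ => ∑' n, a n * neumannMode n ξ :=
  continuous_tsum (fun n => continuous_const.mul (continuous_neumannMode n)) ha
    norm_mul_neumannMode_le

theorem abs_tsum_neumannMode_le (ha : Summable fun n => |a n|) (ξ : ℝ) :
    |∑' n, a n * neumannMode n ξ| ≤ ∑' n, |a n| := by
  have hsum := ha.of_nonneg_of_le (fun _ => norm_nonneg _) (norm_mul_neumannMode_le · ξ)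
  exact (norm_tsum_le_tsum_norm hsum).trans (hsum.tsum_le_tsum (norm_mul_neumannMode_le · ξ) ha)

theorem integral_tsum_neumannMode_mul (ha : Summable fun n => |a n|) {g : ℝ → ℝ}
    (hg : Continuous g) {B : ℝ} (hB : ∀ ξ, |g ξ| ≤ B) :
    ∫ ξ in (0 : ℝ)..1, (∑' n, a n * neumannMode n ξ) * g ξ =
      ∑' n, a n * ∫ ξ in (0 : ℝ)..1, neumannMode n ξ * g ξ := by
  simp_rw [← tsum_mul_right, ← intervalIntegral.integral_const_mul, ← mul_assoc]
  refine intervalIntegral_tsum_of_norm_le (u := fun n => |a n| * B)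
    (fun n => by have := continuous_neumannMode n; fun_prop) (ha.mul_right B) (fun n ξ => ?_) 0 1
  rw [norm_mul]
  exact mul_le_mul (norm_mul_neumannMode_le n ξ) (hB ξ) (norm_nonneg _) (abs_nonneg _)

theorem integral_tsum_neumannMode_mul_neumannMode (ha : Summable fun n => |a n|) (n : ℕ) :
    ∫ ξ in (0 : ℝ)..1, (∑' m, a m * neumannMode m ξ) * neumannMode n ξ = a n / 2 := by
  rw [integral_tsum_neumannMode_mul ha (continuous_neumannMode n) (abs_neumannMode_le_one n),
    tsum_eq_single n fun m hm => by simp [integral_neumannMode_mul, hm]]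
  simp [integral_neumannMode_mul, div_eq_mul_inv]

theorem integral_tsum_neumannMode_sq (ha : Summable fun n => |a n|) :
    ∫ ξ in (0 : ℝ)..1, (∑' n, a n * neumannMode n ξ) ^ 2 = ∑' n, a n ^ 2 / 2 := by
  simp_rw [sq, integral_tsum_neumannMode_mul ha (continuous_tsum_neumannMode ha)
    (abs_tsum_neumannMode_le ha), mul_comm (neumannMode _ _),
    integral_tsum_neumannMode_mul_neumannMode ha, mul_div_assoc]

end CosineSeries

noncomputable def neumannDecay (t : ℝ) (n : ℕ) : ℝ := exp (-((n + 1 : ℝ) ^ 2) * π ^ 2 * t)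

theorem neumannHeatKernel_eq_tsum (t x y : ℝ) :
    NeumannHeatKernel t x y =
      1 + ∑' n, 2 * neumannDecay t n * neumannMode n x * neumannMode n y :=
  rfl

theorem summable_neumannDecay {t : ℝ} (ht : 0 < t) : Summable (neumannDecay t) := by
  have := summable_exp_nat_mul_of_ge (neg_lt_zero.2 (by positivity : 0 < π ^ 2 * t))
    (f := fun n => (n + 1 : ℝ) ^ 2) fun n => by nlinarith
  exact this.congr fun n => by rw [neumannDecay]; ring_nf

theorem summable_neumannHeatKernel_terms {t : ℝ} (ht : 0 < t) (x y : ℝ) :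
    Summable fun n => 2 * neumannDecay t n * neumannMode n x * neumannMode n y := by
  refine ((summable_neumannDecay ht).mul_left 2).of_norm_bounded fun n => ?_
  have := abs_neumannMode_le_one n x
  have := abs_neumannMode_le_one n y
  calc ‖2 * neumannDecay t n * neumannMode n x * neumannMode n y‖
      = 2 * neumannDecay t n * |neumannMode n x| * |neumannMode n y| := by
        simp [neumannDecay, abs_of_pos (exp_pos _)]
    _ ≤ 2 * neumannDecay t n * 1 * 1 := by unfold neumannDecay; gcongr
    _ = 2 * neumannDecay t n := by ring

theorem neumannHeatKernel_sub {t : ℝ} (ht : 0 < t) (x y ξ : ℝ) :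
    NeumannHeatKernel t x ξ - NeumannHeatKernel t y ξ =
      ∑' n, 2 * neumannDecay t n * (neumannMode n x - neumannMode n y) * neumannMode n ξ := by
  rw [neumannHeatKernel_eq_tsum, neumannHeatKernel_eq_tsum, add_sub_add_left_eq_sub,
    ← (summable_neumannHeatKernel_terms ht x ξ).tsum_sub (summable_neumannHeatKernel_terms ht y ξ)]
  congr with n
  ring

theorem integral_sq_neumannHeatKernel_sub {t : ℝ} (ht : 0 < t) (x y : ℝ) :
    ∫ ξ in (0 : ℝ)..1, (NeumannHeatKernel t x ξ - NeumannHeatKernel t y ξ) ^ 2 =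
      ∑' n, 2 * (neumannMode n x - neumannMode n y) ^ 2 *
        exp (-(2 * (n + 1) ^ 2 * π ^ 2) * t) := by
  have hsum : Summable fun n => |2 * neumannDecay t n * (neumannMode n x - neumannMode n y)| := by
    refine ((summable_neumannDecay ht).mul_left 4).of_nonneg_of_le (fun _ => abs_nonneg _)
      fun n => ?_
    have := abs_neumannMode_sub_le_two n x y
    calc |2 * neumannDecay t n * (neumannMode n x - neumannMode n y)|
        = 2 * neumannDecay t n * |neumannMode n x - neumannMode n y| := by
          simp [neumannDecay, abs_of_pos (exp_pos _)]
      _ ≤ 2 * neumannDecay t n * 2 := by unfold neumannDecay; gcongr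
      _ = 4 * neumannDecay t n := by ring
  simp_rw [neumannHeatKernel_sub ht, integral_tsum_neumannMode_sq hsum]
  congr with n
  have : exp (-(2 * (n + 1) ^ 2 * π ^ 2) * t) = neumannDecay t n ^ 2 := by
    rw [neumannDecay, ← exp_nat_mul]; ring_nf
  rw [this]
  ring

theorem sq_neumannMode_sub_div_le_sq (n : ℕ) (x y : ℝ) :
    (neumannMode n x - neumannMode n y) ^ 2 / ((n + 1) ^ 2 * π ^ 2) ≤ |x - y| ^ 2 := by
  rw [div_le_iff₀ (by positivity), ← sq_abs]
  calc |neumannMode n x - neumannMode n y| ^ 2 ≤ ((n + 1) * π * |x - y|) ^ 2 := by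
        gcongr; exact abs_neumannMode_sub_le n x y
    _ = |x - y| ^ 2 * ((n + 1) ^ 2 * π ^ 2) := by ring

theorem sq_neumannMode_sub_div_le_inv_sq (n : ℕ) (x y : ℝ) :
    (neumannMode n x - neumannMode n y) ^ 2 / ((n + 1) ^ 2 * π ^ 2) ≤ ((n + 1 : ℝ) ^ 2)⁻¹ := by
  have hd : (neumannMode n x - neumannMode n y) ^ 2 ≤ π ^ 2 := by
    rw [← sq_abs]
    nlinarith [abs_neumannMode_sub_le_two n x y, pi_gt_three,
      abs_nonneg (neumannMode n x - neumannMode n y)]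
  calc (neumannMode n x - neumannMode n y) ^ 2 / ((n + 1) ^ 2 * π ^ 2)
      ≤ π ^ 2 / ((n + 1) ^ 2 * π ^ 2) := by gcongr
    _ = ((n + 1 : ℝ) ^ 2)⁻¹ := by field_simp

theorem stmt_1 :
    ∃ C > 0, ∀ t : ℝ, 0 < t → ∀ x ∈ Set.Icc (0:ℝ) 1, ∀ y ∈ Set.Icc (0:ℝ) 1,
      ∫ s in (0:ℝ)..t, ∫ ξ in (0:ℝ)..1,
          (NeumannHeatKernel s x ξ - NeumannHeatKernel s y ξ) ^ 2 ≤ C * |x - y| := by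
  refine ⟨3, by norm_num, fun t ht x _ y _ => ?_⟩
  set T : ℕ → ℝ := fun n => (neumannMode n x - neumannMode n y) ^ 2 / ((n + 1) ^ 2 * π ^ 2)
  have hT0 (n : ℕ) : 0 ≤ T n := by positivity
  have time_integral_le (n : ℕ) : ∫ s in Set.Ioc 0 t,
      2 * (neumannMode n x - neumannMode n y) ^ 2 * exp (-(2 * (n + 1) ^ 2 * π ^ 2) * s) ≤ T n :=
    calc _ = 2 * (neumannMode n x - neumannMode n y) ^ 2 *
          ∫ s in Set.Ioc 0 t, exp (-(2 * (n + 1) ^ 2 * π ^ 2) * s) := integral_const_mul _ _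
      _ ≤ 2 * (neumannMode n x - neumannMode n y) ^ 2 * (1 / (2 * (n + 1) ^ 2 * π ^ 2)) := by
          gcongr; exact setIntegral_exp_neg_mul_le (by positivity) t
      _ = T n := by simp only [T]; field_simp
  rw [intervalIntegral.integral_of_le ht.le, setIntegral_congr_fun measurableSet_Ioc
    fun s hs => integral_sq_neumannHeatKernel_sub hs.1 x y]
  calc _ ≤ ∑' n, T n := integral_tsum_le_tsum_of_nonneg
        (fun n => (by fun_prop : Continuous _).integrableOn_Ioc) (fun n s => by positivity)
        (summable_inv_succ_sq.of_nonneg_of_le hT0 (sq_neumannMode_sub_div_le_inv_sq · x y))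
        time_integral_le
    _ ≤ 3 * |x - y| := tsum_le_three_mul_of_le_sq_of_le_inv_sq (abs_nonneg _) hT0
        (sq_neumannMode_sub_div_le_sq · x y) (sq_neumannMode_sub_div_le_inv_sq · x y)
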